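/- arXiv:0903.2174 — 7 statements merged into one kernel-verified Lean document; each statement's English description precedes it below -/
import Mathlib

section
/- Let N ≥ 2 and consider the class of N-player bargaining problems ⟨S,d⟩ where S ⊆ ℝ^N is compact and convex, d ∈ S, and there exists s ∈ S with d_n < s_n for every coordinate n. Suppose F is a bargaining solution (a map assigning to each such problem ⟨S,d⟩ a point F(⟨S,d⟩) ∈ S) satisfying: (LIN) for every choice of α_n > 0 and β_n ∈ ℝ, if ⟨S',d'⟩ is obtained from ⟨S,d⟩ by the coordinatewise affine map s'_n = α_n s_n + β_n, then F_n(⟨S',d'⟩) = α_n F_n(⟨S,d⟩) + β_n for all n; (SYM) if S and d are invariant under swapping coordinates m and n, then F_m(⟨S,d⟩) = F_n(⟨S,d⟩); (PAR) F(⟨S,d⟩) is Pareto optimal in S, i.e. if t ∈ S and F(⟨S,d⟩) ≤ t coordinatewise then t = F(⟨S,d⟩); (IIA) if S ⊆ T, F(⟨T,d⟩) ∈ S, then F(⟨S,d⟩) = F(⟨T,d⟩). Then F is uniquely determined and is given by F(⟨S,d⟩) = argmax over {s ∈ S : d ≤ s coordinatewise} of the Nash product ∏_{n=1}^N (s_n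 − d_n). -/
/-- An `N`-player bargaining problem `⟨S, d⟩`: `S ⊆ ℝ^N` is compact and convex,
the disagreement point `d` belongs to `S`, and some feasible point strictly
dominates `d` in every coordinate. -/
def ValidBargainingProblem (N : ℕ) (S : Set (Fin N → ℝ)) (d : Fin N → ℝ) : Prop :=
  IsCompact S ∧ Convex ℝ S ∧ d ∈ S ∧ ∃ s ∈ S, ∀ n, d n < s n

/-- The Nash product relative to the disagreement point `d`. -/
noncomputable def nashProduct {N : ℕ} (d s : Fin N → ℝ) : ℝ :=
  ∏ n, (s n - d n)

/-! Normalize by the coordinatewise affine map sending `d` to `0` and a maximizer `u` of the Nash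
product to `1`. Then `1` maximizes `∏ sₙ` on the normalized feasible set `S'`, and since the
gradient of `∏ sₙ` at `1` is `(1, …, 1)`, Fermat's rule along segments from `1` puts `S'` in
the half-space `∑ sₙ ≤ N`. Cut that half-space down to a simplex `T ⊇ S'` invariant under all
coordinate permutations: SYM makes `F(T, 0)` a constant vector, which PAR forces to be `1`; IIA
gives `F(S', 0) = 1` and LIN transports this back to `F(S, d) = u`. As `u` was an arbitrary
maximizer, the maximizer is unique. -/

open Filter Topology

theorem sum_le_card_of_isMaxOn_prod {ι : Type*} [Fintype ι] {S : Set (ι → ℝ)}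
    (hS : Convex ℝ S) (h1 : 1 ∈ S) (hmax : IsMaxOn (fun x => ∏ i, x i) {x ∈ S | 0 ≤ x} 1)
    {s : ι → ℝ} (hs : s ∈ S) : ∑ i, s i ≤ Fintype.card ι := by
  classical
  set c := s - 1
  set g : ℝ → ℝ := fun t => ∏ i, (1 + t * c i)
  set D : Set ℝ := {t | 0 ≤ t ∧ t ≤ 1 ∧ ∀ i, 0 ≤ 1 + t * c i}
  have hg : HasDerivAt g (∑ i, c i) 0 := by
    simpa using HasDerivAt.fun_finsetProd (u := Finset.univ) (x := (0 : ℝ))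
      fun i _ => ((hasDerivAt_id (0 : ℝ)).mul_const (c i)).const_add 1
  have hmaxD : IsMaxOn g D 0 := by
    rintro t ⟨ht0, ht1, hpos⟩
    have hseg : (1 - t) • (1 : ι → ℝ) + t • s = fun i => 1 + t * c i := by
      ext i
      simp only [Pi.add_apply, Pi.smul_apply, Pi.one_apply, smul_eq_mul, mul_one, Pi.sub_apply, c]
      ring
    have hmem : (fun i => 1 + t * c i) ∈ S := hseg ▸ hS h1 hs (sub_nonneg.2 ht1) ht0 (by ring)
    simpa [g] using hmax ⟨hmem, hpos⟩
  have hcone : (1 : ℝ) ∈ posTangentConeAt D 0 := by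
    refine mem_posTangentConeAt_of_frequently_mem (Eventually.frequently ?_)
    have hpos : ∀ᶠ t in 𝓝 (0 : ℝ), ∀ i, 0 < 1 + t * c i := eventually_all.2 fun i =>
      continuousAt_const.eventually_lt (by fun_prop) (by simp)
    filter_upwards [self_mem_nhdsWithin, nhdsWithin_le_nhds (eventually_le_nhds zero_lt_one),
      nhdsWithin_le_nhds hpos] with t ht0 ht1 htpos
    simpa using ⟨le_of_lt ht0, ht1, fun i => (htpos i).le⟩
  have := hmaxD.localize.hasFDerivWithinAt_nonpos hg.hasFDerivAt.hasFDerivWithinAt hcone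
  simpa [c, Finset.sum_sub_distrib] using this

theorem continuous_nashProduct {N : ℕ} (d : Fin N → ℝ) : Continuous (nashProduct d) :=
  continuous_finsetProd _ fun n _ => (continuous_apply n).sub continuous_const

theorem nashProduct_zero {N : ℕ} : nashProduct (0 : Fin N → ℝ) = fun s => ∏ n, s n := by
  ext s; simp [nashProduct]

theorem ValidBargainingProblem.exists_isMaxOn_nashProduct {N : ℕ} {S : Set (Fin N → ℝ)}
    {d : Fin N → ℝ} (hval : ValidBargainingProblem N S d) :
    ∃ u ∈ {s ∈ S | d ≤ s}, IsMaxOn (nashProduct d) {s ∈ S | d ≤ s} u :=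
  (hval.1.inter_right isClosed_Ici).exists_isMaxOn ⟨d, hval.2.2.1, Set.self_mem_Ici⟩
    (continuous_nashProduct d).continuousOn

theorem ValidBargainingProblem.lt_of_isMaxOn_nashProduct {N : ℕ} {S : Set (Fin N → ℝ)}
    {d u : Fin N → ℝ} (hval : ValidBargainingProblem N S d) (hu : u ∈ {s ∈ S | d ≤ s})
    (hmax : IsMaxOn (nashProduct d) {s ∈ S | d ≤ s} u) (n : Fin N) : d n < u n := by
  obtain ⟨-, -, -, s, hs, hds⟩ := hval
  have hpos : 0 < nashProduct d u :=
    (Finset.prod_pos fun n _ => sub_pos.2 (hds n)).trans_le (hmax ⟨hs, fun n => (hds n).le⟩)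
  have hne : u n - d n ≠ 0 := Finset.prod_ne_zero_iff.1 hpos.ne' n (Finset.mem_univ n)
  exact lt_of_le_of_ne (hu.2 n) (sub_ne_zero.1 hne).symm

def coordAffine {ι : Type*} (α β s : ι → ℝ) : ι → ℝ :=
  fun i => α i * s i + β i

section coordAffine

variable {ι : Type*} {α β : ι → ℝ}

theorem coordAffine_le_coordAffine_iff (hα : ∀ i, 0 < α i) {x y : ι → ℝ} :
    coordAffine α β x ≤ coordAffine α β y ↔ x ≤ y :=
  forall_congr' fun i => by simp [coordAffine, hα i]

theorem coordAffine_injective (hα : ∀ i, 0 < α i) : Function.Injective (coordAffine α β) :=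
  fun _ _ h => le_antisymm ((coordAffine_le_coordAffine_iff hα).1 h.le)
    ((coordAffine_le_coordAffine_iff hα).1 h.ge)

theorem exists_coordAffine_eq_zero_eq_one {d u : ι → ℝ} (hdu : ∀ i, d i < u i) :
    ∃ α β : ι → ℝ, (∀ i, 0 < α i) ∧ coordAffine α β d = 0 ∧ coordAffine α β u = 1 := by
  refine ⟨(u - d)⁻¹, -((u - d)⁻¹ * d), fun i => inv_pos.2 (sub_pos.2 (hdu i)), ?_, ?_⟩ <;>
    ext i
  · simp [coordAffine]
  · simp only [coordAffine, Pi.neg_apply, Pi.mul_apply, Pi.inv_apply, Pi.sub_apply, Pi.one_apply]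
    rw [← sub_eq_add_neg, ← mul_sub, inv_mul_cancel₀ (sub_pos.2 (hdu i)).ne']

end coordAffine

section nashProduct_coordAffine

variable {N : ℕ} {α β : Fin N → ℝ}

theorem nashProduct_coordAffine (d s : Fin N → ℝ) :
    nashProduct (coordAffine α β d) (coordAffine α β s) = (∏ n, α n) * nashProduct d s := by
  simp only [nashProduct, coordAffine, ← Finset.prod_mul_distrib]
  exact Finset.prod_congr rfl fun n _ => by ring

theorem ValidBargainingProblem.image_coordAffine {S : Set (Fin N → ℝ)} {d : Fin N → ℝ}
    (hval : ValidBargainingProblem N S d) (hα : ∀ n, 0 < α n) :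
    ValidBargainingProblem N (coordAffine α β '' S) (coordAffine α β d) := by
  obtain ⟨hcomp, hconv, hd, s, hs, hds⟩ := hval
  refine ⟨hcomp.image (by unfold coordAffine; fun_prop), ?_, Set.mem_image_of_mem _ hd,
    _, Set.mem_image_of_mem _ hs, fun n => by simpa [coordAffine, hα n] using hds n⟩
  rintro _ ⟨x, hx, rfl⟩ _ ⟨y, hy, rfl⟩ a b ha hb hab
  refine ⟨a • x + b • y, hconv hx hy ha hb hab, ?_⟩
  ext n
  simp only [coordAffine, Pi.add_apply, Pi.smul_apply, smul_eq_mul]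
  linear_combination (-β n) * hab

theorem IsMaxOn.image_coordAffine {S : Set (Fin N → ℝ)} {d u : Fin N → ℝ}
    (hα : ∀ n, 0 < α n) (hmax : IsMaxOn (nashProduct d) {s ∈ S | d ≤ s} u) :
    IsMaxOn (nashProduct (coordAffine α β d))
      {s ∈ coordAffine α β '' S | coordAffine α β d ≤ s} (coordAffine α β u) := by
  rintro _ ⟨⟨s, hs, rfl⟩, hds⟩
  simp only [Set.mem_ofPred_eq, nashProduct_coordAffine]
  exact mul_le_mul_of_nonneg_left (hmax ⟨hs, (coordAffine_le_coordAffine_iff hα).1 hds⟩)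
    (Finset.prod_nonneg fun n _ => (hα n).le)

end nashProduct_coordAffine

def symmetricSimplex (ι : Type*) [Fintype ι] (m : ℝ) : Set (ι → ℝ) :=
  {s | ∑ i, s i ≤ Fintype.card ι} ∩ Set.Ici (fun _ => m)

section symmetricSimplex

variable {ι : Type*} [Fintype ι] {m : ℝ}

theorem isCompact_symmetricSimplex : IsCompact (symmetricSimplex ι m) := by
  refine (isCompact_Icc (b := fun _ => Fintype.card ι * (1 - m) + m)).of_isClosed_subset
    ((isClosed_le (by fun_prop) continuous_const).inter isClosed_Ici)
    fun s ⟨hsum, hm⟩ => ⟨hm, fun i => ?_⟩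
  have := Finset.single_le_sum (fun j _ => sub_nonneg.2 (hm j)) (Finset.mem_univ i)
  simp only [Finset.sum_sub_distrib, Finset.sum_const, Finset.card_univ, nsmul_eq_mul] at this
  show s i ≤ Fintype.card ι * (1 - m) + m
  linarith [show ∑ j, s j ≤ (Fintype.card ι : ℝ) from hsum]

theorem convex_symmetricSimplex : Convex ℝ (symmetricSimplex ι m) :=
  (convex_halfSpace_le ⟨fun x y => Finset.sum_add_distrib,
    fun c x => by simp [Finset.mul_sum]⟩ _).inter (convex_Ici _)

theorem one_mem_symmetricSimplex (hm : m ≤ 1) : 1 ∈ symmetricSimplex ι m :=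
  ⟨by simp, fun _ => hm⟩

theorem image_comp_perm_symmetricSimplex (σ : Equiv.Perm ι) :
    (fun s => s ∘ σ) '' symmetricSimplex ι m = symmetricSimplex ι m := by
  have hmem : ∀ (τ : Equiv.Perm ι), ∀ s ∈ symmetricSimplex ι m, s ∘ τ ∈ symmetricSimplex ι m :=
    fun τ s ⟨hsum, hm⟩ => ⟨by simpa [Equiv.sum_comp τ s] using hsum, fun i => hm (τ i)⟩
  refine subset_antisymm (Set.image_subset_iff.2 (hmem σ)) fun s hs =>
    ⟨s ∘ σ.symm, hmem σ.symm s hs, by ext i; simp⟩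

end symmetricSimplex

theorem validBargainingProblem_symmetricSimplex {N : ℕ} {m : ℝ} (hm : m ≤ 0) :
    ValidBargainingProblem N (symmetricSimplex (Fin N) m) 0 :=
  ⟨isCompact_symmetricSimplex, convex_symmetricSimplex, ⟨by simp, fun _ => hm⟩,
    1, one_mem_symmetricSimplex (hm.trans zero_le_one), fun _ => zero_lt_one⟩

theorem le_one_of_sum_le_card {ι : Type*} [Fintype ι] {x : ι → ℝ} (hx : ∀ i j, x i = x j)
    (hsum : ∑ i, x i ≤ Fintype.card ι) (i : ι) : x i ≤ 1 := by
  have hcard : (0 : ℝ) < Fintype.card ι := Nat.cast_pos.2 (Fintype.card_pos_iff.2 ⟨i⟩)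
  rw [Finset.sum_congr rfl fun j _ => hx j i, Finset.sum_const, Finset.card_univ,
    nsmul_eq_mul] at hsum
  nlinarith

theorem solution_eq_one_of_sum_le_card {N : ℕ}
    {F : Set (Fin N → ℝ) → (Fin N → ℝ) → (Fin N → ℝ)}
    (hmem : ∀ S d, ValidBargainingProblem N S d → F S d ∈ S)
    (hSYM : ∀ S d, ValidBargainingProblem N S d → ∀ m n : Fin N,
      (fun s : Fin N → ℝ => s ∘ Equiv.swap m n) '' S = S →
      d ∘ Equiv.swap m n = d →
      F S d m = F S d n)
    (hPAR : ∀ S d, ValidBargainingProblem N S d →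
      ∀ t ∈ S, (∀ n, F S d n ≤ t n) → t = F S d)
    (hIIA : ∀ S T d, ValidBargainingProblem N S d → ValidBargainingProblem N T d →
      S ⊆ T → F T d ∈ S → F S d = F T d)
    {S : Set (Fin N → ℝ)} (hval : ValidBargainingProblem N S 0) (h1 : 1 ∈ S)
    (hsum : ∀ s ∈ S, ∑ n, s n ≤ Fintype.card (Fin N)) : F S 0 = 1 := by
  obtain ⟨R, hR0, hR⟩ := hval.1.isBounded.exists_pos_norm_le
  set T := symmetricSimplex (Fin N) (-R)
  have hT : ValidBargainingProblem N T 0 := validBargainingProblem_symmetricSimplex (by linarith)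
  have hST : S ⊆ T := fun s hs =>
    ⟨hsum s hs, fun n => neg_le_of_abs_le ((norm_le_pi_norm s n).trans (hR s hs))⟩
  have hFT : 1 = F T 0 := by
    refine hPAR T 0 hT 1 (one_mem_symmetricSimplex (by linarith)) fun n => ?_
    exact le_one_of_sum_le_card
      (fun m n => hSYM T 0 hT m n (image_comp_perm_symmetricSimplex _) rfl) (hmem T 0 hT).1 n
  rw [hIIA S T 0 hval hT hST (hFT ▸ h1), hFT]

theorem nash_bargaining_solution_unique_general (N : ℕ)
    (F : Set (Fin N → ℝ) → (Fin N → ℝ) → (Fin N → ℝ))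
    (hmem : ∀ S d, ValidBargainingProblem N S d → F S d ∈ S)
    (hLIN : ∀ S d, ValidBargainingProblem N S d →
      ∀ α β : Fin N → ℝ, (∀ n, 0 < α n) →
        ∀ n, F ((fun s n => α n * s n + β n) '' S) (fun n => α n * d n + β n) n
              = α n * F S d n + β n)
    (hSYM : ∀ S d, ValidBargainingProblem N S d → ∀ m n : Fin N,
      (fun s : Fin N → ℝ => s ∘ Equiv.swap m n) '' S = S →
      d ∘ Equiv.swap m n = d →
      F S d m = F S d n)
    (hPAR : ∀ S d, ValidBargainingProblem N S d →
      ∀ t ∈ S, (∀ n, F S d n ≤ t n) → t = F S d)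
    (hIIA : ∀ S T d, ValidBargainingProblem N S d → ValidBargainingProblem N T d →
      S ⊆ T → F T d ∈ S → F S d = F T d) :
    ∀ S d, ValidBargainingProblem N S d →
      F S d ∈ {s ∈ S | ∀ n, d n ≤ s n} ∧
      IsMaxOn (nashProduct d) {s ∈ S | ∀ n, d n ≤ s n} (F S d) ∧
      ∀ t ∈ {s ∈ S | ∀ n, d n ≤ s n},
        IsMaxOn (nashProduct d) {s ∈ S | ∀ n, d n ≤ s n} t → t = F S d := by
  intro S d hval
  have key : ∀ u ∈ {s ∈ S | d ≤ s}, IsMaxOn (nashProduct d) {s ∈ S | d ≤ s} u → F S d = u := by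
    intro u hu hmax
    obtain ⟨α, β, hα, hAd, hAu⟩ :=
      exists_coordAffine_eq_zero_eq_one (hval.lt_of_isMaxOn_nashProduct hu hmax)
    have hval' := hval.image_coordAffine (β := β) hα
    have hmax' := hmax.image_coordAffine (β := β) hα
    rw [hAd] at hval'
    rw [hAd, hAu, nashProduct_zero] at hmax'
    have h1 : 1 ∈ coordAffine α β '' S := hAu ▸ Set.mem_image_of_mem _ hu.1
    have hF1 : F (coordAffine α β '' S) 0 = 1 :=
      solution_eq_one_of_sum_le_card hmem hSYM hPAR hIIA hval' h1 fun s hs =>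
        sum_le_card_of_isMaxOn_prod hval'.2.1 h1 hmax' hs
    refine coordAffine_injective hα <|
      calc coordAffine α β (F S d)
          = F (coordAffine α β '' S) (coordAffine α β d) :=
            funext fun n => (hLIN S d hval α β hα n).symm
        _ = coordAffine α β u := by rw [hAd, hF1, hAu]
  obtain ⟨u, hu, hmax⟩ := hval.exists_isMaxOn_nashProduct
  obtain rfl := key u hu hmax
  exact ⟨hu, hmax, fun t ht hmaxt => (key t ht hmaxt).symm⟩

/-- Nash's theorem: a bargaining solution `F` satisfying LIN, SYM, PAR and IIA
is uniquely determined, and is given by the maximizer of the Nash product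
over the points of `S` dominating `d`. -/
theorem nash_bargaining_solution_unique (N : ℕ) (hN : 2 ≤ N)
    (F : Set (Fin N → ℝ) → (Fin N → ℝ) → (Fin N → ℝ))
    (hmem : ∀ S d, ValidBargainingProblem N S d → F S d ∈ S)
    (hLIN : ∀ S d, ValidBargainingProblem N S d →
      ∀ α β : Fin N → ℝ, (∀ n, 0 < α n) →
        ∀ n, F ((fun s n => α n * s n + β n) '' S) (fun n => α n * d n + β n) n
              = α n * F S d n + β n)
    (hSYM : ∀ S d, ValidBargainingProblem N S d → ∀ m n : Fin N,
      (fun s : Fin N → ℝ => s ∘ Equiv.swap m n) '' S = S →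
      d ∘ Equiv.swap m n = d →
      F S d m = F S d n)
    (hPAR : ∀ S d, ValidBargainingProblem N S d →
      ∀ t ∈ S, (∀ n, F S d n ≤ t n) → t = F S d)
    (hIIA : ∀ S T d, ValidBargainingProblem N S d → ValidBargainingProblem N T d →
      S ⊆ T → F T d ∈ S → F S d = F T d) :
    ∀ S d, ValidBargainingProblem N S d →
      F S d ∈ {s ∈ S | ∀ n, d n ≤ s n} ∧
      IsMaxOn (nashProduct d) {s ∈ S | ∀ n, d n ≤ s n} (F S d) ∧
      ∀ t ∈ {s ∈ S | ∀ n, d n ≤ s n},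
        IsMaxOn (nashProduct d) {s ∈ S | ∀ n, d n ≤ s n} t → t = F S d :=
  nash_bargaining_solution_unique_general N F hmem hLIN hSYM hPAR hIIA
end

section
/- For every h with 0 < h < 1 and every s > 0, the temptation payoff strictly exceeds the reward payoff in the symmetric two-band interference game: (1/2)·log₂(1 + (1+h)/(2s)) + (1/2)·log₂(1 + (1−h)/(2(s+h))) > (1/2)·log₂(1 + 1/s). -/
/-! Both factors of the temptation product have numerator `(s + 1) + (s + h)`, so
`(1 + (1+h)/(2s)) (1 + (1-h)/(2(s+h))) = ((s+1) + (s+h))² / (4 s (s+h))`, while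
`1 + 1/s = 4 (s+1)(s+h) / (4 s (s+h))`. Strict AM-GM for `s + 1 ≠ s + h`, i.e. `h ≠ 1`,
gives the inequality of the arguments, and `logb 2` is strictly monotone and additive. -/

theorem four_mul_lt_sq_add {a b : ℝ} (hab : a ≠ b) : 4 * a * b < (a + b) ^ 2 := by
  have : 0 < (a - b) ^ 2 := by positivity [sub_ne_zero.mpr hab]
  nlinarith

theorem temptation_factors_mul_eq {h s : ℝ} (hs : s ≠ 0) (hsh : s + h ≠ 0) :
    (1 + (1 + h) / (2 * s)) * (1 + (1 - h) / (2 * (s + h)))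
      = ((s + 1) + (s + h)) ^ 2 / (4 * s * (s + h)) := by
  field_simp
  ring

theorem reward_arg_lt_temptation_arg {h s : ℝ} (hs : 0 < s) (hsh : 0 < s + h) (hh : h ≠ 1) :
    1 + 1 / s < (1 + (1 + h) / (2 * s)) * (1 + (1 - h) / (2 * (s + h))) := by
  have hden : 0 < 4 * s * (s + h) := by positivity
  calc 1 + 1 / s = 4 * (s + 1) * (s + h) / (4 * s * (s + h)) := by
        field_simp
    _ < ((s + 1) + (s + h)) ^ 2 / (4 * s * (s + h)) :=
        div_lt_div_of_pos_right (four_mul_lt_sq_add (by contrapose! hh; linarith)) hden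
    _ = _ := (temptation_factors_mul_eq hs.ne' hsh.ne').symm

/-- In the symmetric two-band interference game with cross-gain `h ∈ (0,1)` and
inverse SNR `s > 0`, the temptation payoff strictly exceeds the reward payoff:
`(1/2)log₂(1 + (1+h)/(2s)) + (1/2)log₂(1 + (1-h)/(2(s+h))) > (1/2)log₂(1 + 1/s)`. -/
theorem temptation_gt_reward (h s : ℝ) (hh0 : 0 < h) (hh1 : h < 1) (hs : 0 < s) :
    (1/2) * Real.logb 2 (1 + 1/s) <
      (1/2) * Real.logb 2 (1 + (1 + h) / (2 * s))
        + (1/2) * Real.logb 2 (1 + (1 - h) / (2 * (s + h))) := by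
  have hsh : 0 < s + h := by linarith
  have hfirst : 0 < 1 + (1 + h) / (2 * s) := by positivity
  have hsecond : 0 < 1 + (1 - h) / (2 * (s + h)) := by
    have : 0 < (1 - h) / (2 * (s + h)) := div_pos (by linarith) (by positivity)
    linarith
  have hlog := Real.logb_lt_logb one_lt_two (by positivity)
    (reward_arg_lt_temptation_arg hs hsh hh1.ne)
  rw [Real.logb_mul hfirst.ne' hsecond.ne'] at hlog
  linarith
end

section
/- For every h with 0 < h < 1 and every s > 0, the temptation payoff strictly exceeds the penalty payoff in the symmetric two-band interference game: (1/2)·log₂(1 + (1+h)/(2s)) + (1/2)·log₂(1 + (1−h)/(2(s+h))) > log₂(1 + 1/(2s+h)). -/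
/-- In the symmetric two-band interference game with cross-gain `h ∈ (0,1)` and
inverse SNR `s > 0`, the temptation payoff strictly exceeds the penalty payoff:
`(1/2)log₂(1 + (1+h)/(2s)) + (1/2)log₂(1 + (1-h)/(2(s+h))) > log₂(1 + 1/(2s+h))`. -/
theorem temptation_gt_penalty (h s : ℝ) (hh0 : 0 < h) (hh1 : h < 1) (hs : 0 < s) :
    Real.logb 2 (1 + 1 / (2 * s + h)) <
      (1/2) * Real.logb 2 (1 + (1 + h) / (2 * s))
        + (1/2) * Real.logb 2 (1 + (1 - h) / (2 * (s + h))) := by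
  have h1 : 0 < 2 * s + h := by linarith
  have h2 : 0 < 2 * s := by linarith
  have h3 : 0 < 2 * (s + h) := by linarith
  have hxpos : 0 < 1 + 1 / (2 * s + h) := by positivity
  have hApos : 0 < 1 + (1 + h) / (2 * s) := by
    have : 0 < (1 + h) / (2 * s) := div_pos (by linarith) h2
    linarith
  have hBpos : 0 < 1 + (1 - h) / (2 * (s + h)) := by
    have : 0 < (1 - h) / (2 * (s + h)) := div_pos (by linarith) h3
    linarith
  have key : (1 + 1 / (2 * s + h)) ^ 2
      < (1 + (1 + h) / (2 * s)) * (1 + (1 - h) / (2 * (s + h))) := by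
    rw [show (1:ℝ) + 1 / (2 * s + h) = (2 * s + h + 1) / (2 * s + h) by field_simp,
        show (1:ℝ) + (1 + h) / (2 * s) = (2 * s + 1 + h) / (2 * s) by field_simp; ring,
        show (1:ℝ) + (1 - h) / (2 * (s + h)) = (2 * (s + h) + (1 - h)) / (2 * (s + h)) by
          field_simp,
        div_pow, div_mul_div_comm, div_lt_div_iff₀ (by positivity) (by positivity)]
    nlinarith [sq_nonneg h, sq_nonneg (2 * s + h + 1), mul_pos hs hh0]
  calc Real.logb 2 (1 + 1 / (2 * s + h))
      = (1/2) * Real.logb 2 ((1 + 1 / (2 * s + h)) ^ 2) := by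
        rw [Real.logb_pow]; ring
    _ < (1/2) * Real.logb 2 ((1 + (1 + h) / (2 * s)) * (1 + (1 - h) / (2 * (s + h)))) := by
        have := Real.logb_lt_logb (b := 2) one_lt_two (pow_pos hxpos 2) key
        linarith
    _ = (1/2) * Real.logb 2 (1 + (1 + h) / (2 * s))
          + (1/2) * Real.logb 2 (1 + (1 - h) / (2 * (s + h))) := by
        rw [Real.logb_mul (ne_of_gt hApos) (ne_of_gt hBpos)]; ring
end

section
/- Consider the Gaussian interference game with 3 players and 2 tones in which all channel power gains equal 1 (each receiver hears the sum of all three transmitted signals), the noise power is σ² > 0 at tone 1 and σ² + P at tone 2, and each player n chooses p_n ∈ [0,P]² with p_n(1) + p_n(2) = P, receiving payoff C_n = Σ_{k=1}^2 log₂(1 + p_n(k) / (Σ_{m≠n} p_m(k) + σ²(k))) where σ²(1) = σ² and σ²(2) = σ² + P. Then the power allocation profile p_1 = p_2 = (P, 0), p_3 = (0, P) (two users placing all power on tone 1 and one user on tone 2) is a pure-strategy Nash equilibrium, in which each user achieves rate log₂(1 + P/(P + σ²)). -/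
lemma aux_logb (P σ2 : ℝ) (hP : 0 < P) (hσ : 0 < σ2) (q0 q1 : ℝ)
    (h0 : 0 ≤ q0) (h1 : 0 ≤ q1) (hsum : q0 + q1 = P) :
    Real.logb 2 (1 + q0 / (P + σ2)) + Real.logb 2 (1 + q1 / (2 * P + σ2)) ≤
      Real.logb 2 (1 + P / (P + σ2)) := by
  have ha : (0:ℝ) < P + σ2 := by linarith
  have hb : (0:ℝ) < 2 * P + σ2 := by linarith
  have hx : (0:ℝ) < 1 + q0 / (P + σ2) := by positivity
  have hy : (0:ℝ) < 1 + q1 / (2 * P + σ2) := by positivity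
  rw [← Real.logb_mul (ne_of_gt hx) (ne_of_gt hy)]
  apply Real.logb_le_logb_of_le one_lt_two (by positivity)
  rw [one_add_div (ne_of_gt ha), one_add_div (ne_of_gt ha),
    one_add_div (ne_of_gt hb), div_mul_div_comm, div_le_div_iff₀ (by positivity) ha]
  nlinarith [mul_nonneg (mul_nonneg h1 (show (0:ℝ) ≤ P - q0 by linarith)) ha.le,
    mul_pos ha hb]

/-- In the Gaussian interference game with 3 players, 2 tones, unit channel
gains, noise `σ²` at tone 1 and `σ² + P` at tone 2, and per-player power
budget `P`, the profile in which players 1 and 2 put all their power on tone 1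
and player 3 puts all its power on tone 2 is a pure-strategy Nash equilibrium,
and each player's rate there equals `log₂(1 + P/(P + σ²))`. -/
theorem three_player_two_tone_nash (P σ2 : ℝ) (hP : 0 < P) (hσ : 0 < σ2)
    (noise : Fin 2 → ℝ) (hn0 : noise 0 = σ2) (hn1 : noise 1 = σ2 + P)
    (C : Fin 3 → (Fin 3 → Fin 2 → ℝ) → ℝ)
    (hC : ∀ n p, C n p =
      ∑ k, Real.logb 2 (1 + p n k / ((∑ m ∈ Finset.univ.erase n, p m k) + noise k)))
    (p : Fin 3 → Fin 2 → ℝ)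
    (hp0 : p 0 = ![P, 0]) (hp1 : p 1 = ![P, 0]) (hp2 : p 2 = ![0, P]) :
    (∀ n : Fin 3, ∀ q : Fin 2 → ℝ,
        (∀ k, 0 ≤ q k ∧ q k ≤ P) → q 0 + q 1 = P →
        C n (Function.update p n q) ≤ C n p) ∧
    (∀ n : Fin 3, C n p = Real.logb 2 (1 + P / (P + σ2))) := by
  have hval : ∀ n : Fin 3, C n p = Real.logb 2 (1 + P / (P + σ2)) := by
    have h0 : C 0 p = Real.logb 2 (1 + P / (P + σ2)) := by
      rw [hC]
      simp only [Fin.sum_univ_two, Finset.sum_erase_eq_sub (Finset.mem_univ _),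
        Fin.sum_univ_three, hp0, hp1, hp2, hn0, hn1,
        Matrix.cons_val_zero, Matrix.cons_val_one, Matrix.head_cons]
      norm_num
    have h1 : C 1 p = Real.logb 2 (1 + P / (P + σ2)) := by
      rw [hC]
      simp only [Fin.sum_univ_two, Finset.sum_erase_eq_sub (Finset.mem_univ _),
        Fin.sum_univ_three, hp0, hp1, hp2, hn0, hn1,
        Matrix.cons_val_zero, Matrix.cons_val_one, Matrix.head_cons]
      norm_num
    have h2 : C 2 p = Real.logb 2 (1 + P / (P + σ2)) := by
      rw [hC]
      simp only [Fin.sum_univ_two, Finset.sum_erase_eq_sub (Finset.mem_univ _),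
        Fin.sum_univ_three, hp0, hp1, hp2, hn0, hn1,
        Matrix.cons_val_zero, Matrix.cons_val_one, Matrix.head_cons]
      have e1 : P + P + 0 - 0 + σ2 = 2 * P + σ2 := by ring
      have e2 : 0 + 0 + P - P + (σ2 + P) = σ2 + P := by ring
      rw [e1, e2]
      norm_num [add_comm σ2 P]
    intro n
    fin_cases n
    exacts [h0, h1, h2]
  refine ⟨?_, hval⟩
  intro n q hq hsum
  have hq0 := (hq 0).1
  have hq1 := (hq 1).1
  have key0 : C 0 (Function.update p 0 q) ≤ C 0 p := by
    rw [hC, hval 0]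
    simp only [Fin.sum_univ_two, Finset.sum_erase_eq_sub (Finset.mem_univ _),
      Fin.sum_univ_three, Function.update_self,
      Function.update_of_ne (show (1:Fin 3) ≠ 0 by decide),
      Function.update_of_ne (show (2:Fin 3) ≠ 0 by decide),
      hp0, hp1, hp2, hn0, hn1,
      Matrix.cons_val_zero, Matrix.cons_val_one, Matrix.head_cons]
    have e1 : q 0 + P + 0 - q 0 + σ2 = P + σ2 := by ring
    have e2 : q 1 + 0 + P - q 1 + (σ2 + P) = 2 * P + σ2 := by ring
    rw [e1, e2]
    exact aux_logb P σ2 hP hσ (q 0) (q 1) hq0 hq1 hsum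
  have key1 : C 1 (Function.update p 1 q) ≤ C 1 p := by
    rw [hC, hval 1]
    simp only [Fin.sum_univ_two, Finset.sum_erase_eq_sub (Finset.mem_univ _),
      Fin.sum_univ_three, Function.update_self,
      Function.update_of_ne (show (0:Fin 3) ≠ 1 by decide),
      Function.update_of_ne (show (2:Fin 3) ≠ 1 by decide),
      hp0, hp1, hp2, hn0, hn1,
      Matrix.cons_val_zero, Matrix.cons_val_one, Matrix.head_cons]
    have e1 : P + q 0 + 0 - q 0 + σ2 = P + σ2 := by ring
    have e2 : 0 + q 1 + P - q 1 + (σ2 + P) = 2 * P + σ2 := by ring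
    rw [e1, e2]
    exact aux_logb P σ2 hP hσ (q 0) (q 1) hq0 hq1 hsum
  have key2 : C 2 (Function.update p 2 q) ≤ C 2 p := by
    rw [hC, hval 2]
    simp only [Fin.sum_univ_two, Finset.sum_erase_eq_sub (Finset.mem_univ _),
      Fin.sum_univ_three, Function.update_self,
      Function.update_of_ne (show (0:Fin 3) ≠ 2 by decide),
      Function.update_of_ne (show (1:Fin 3) ≠ 2 by decide),
      hp0, hp1, hp2, hn0, hn1,
      Matrix.cons_val_zero, Matrix.cons_val_one, Matrix.head_cons]
    have e1 : P + P + q 0 - q 0 + σ2 = 2 * P + σ2 := by ring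
    have e2 : 0 + 0 + q 1 - q 1 + (σ2 + P) = P + σ2 := by ring
    rw [e1, e2, add_comm]
    exact aux_logb P σ2 hP hσ (q 1) (q 0) hq1 hq0 (by linarith)
  fin_cases n
  exacts [key0, key1, key2]
end

section
/- Consider the two-player FDM/TDM Nash bargaining problem over K frequency bins: given per-bin rates R_1(k) > 0, R_2(k) > 0 for k = 1,…,K and disagreement rates R_{1C}, R_{2C} ≥ 0, for α ∈ [0,1]^K define R_1(α) = Σ_k α(k) R_1(k) and R_2(α) = Σ_k (1 − α(k)) R_2(k). Suppose α* maximizes (R_1(α) − R_{1C})(R_2(α) − R_{2C}) over {α ∈ [0,1]^K : R_1(α) ≥ R_{1C}, R_2(α) ≥ R_{2C}} and satisfies R_1(α*) > R_{1C} and R_2(α*) > R_{2C}. Then for every bin k: (1) if 0 < α*(k) < 1 then R_1(k)/(R_1(α*) − R_{1C}) = R_2(k)/(R_2(α*) − R_{2C}); (2) if R_1(k)/(R_1(α*) − R_{1C}) > R_2(k)/(R_2(α*) − R_{2C}) then α*(k) = 1; and (3) if R_1(k)/(R_1(α*) − R_{1C}) < R_2(k)/(R_2(α*) − R_{2C}) then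 α*(k) = 0. -/
/-- KKT allocation rules for the two-player FDM/TDM Nash bargaining problem:
if `α` maximizes the Nash product
`(Σ_k α k · R1 k − R1C)(Σ_k (1 − α k) · R2 k − R2C)` over
`{α ∈ [0,1]^K : R1(α) ≥ R1C, R2(α) ≥ R2C}` with both surpluses strictly
positive, then for each bin `k`: a fractionally shared bin equalizes the
normalized rates, and a strict inequality between them forces `α k = 1`
(resp. `α k = 0`). -/
theorem fdm_tdm_nbs_allocation_rules (K : ℕ) (R1 R2 : Fin K → ℝ)
    (hR1 : ∀ k, 0 < R1 k) (hR2 : ∀ k, 0 < R2 k)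
    (R1C R2C : ℝ) (hR1C : 0 ≤ R1C) (hR2C : 0 ≤ R2C)
    (α : Fin K → ℝ)
    (hmem : α ∈ {a : Fin K → ℝ | (∀ k, a k ∈ Set.Icc (0:ℝ) 1) ∧
        R1C ≤ ∑ k, a k * R1 k ∧ R2C ≤ ∑ k, (1 - a k) * R2 k})
    (hmax : IsMaxOn
      (fun a : Fin K → ℝ =>
        ((∑ k, a k * R1 k) - R1C) * ((∑ k, (1 - a k) * R2 k) - R2C))
      {a : Fin K → ℝ | (∀ k, a k ∈ Set.Icc (0:ℝ) 1) ∧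
        R1C ≤ ∑ k, a k * R1 k ∧ R2C ≤ ∑ k, (1 - a k) * R2 k} α)
    (hs1 : R1C < ∑ k, α k * R1 k) (hs2 : R2C < ∑ k, (1 - α k) * R2 k) :
    ∀ k : Fin K,
      (0 < α k ∧ α k < 1 →
        R1 k / ((∑ j, α j * R1 j) - R1C) = R2 k / ((∑ j, (1 - α j) * R2 j) - R2C)) ∧
      (R2 k / ((∑ j, (1 - α j) * R2 j) - R2C) < R1 k / ((∑ j, α j * R1 j) - R1C) →
        α k = 1) ∧
      (R1 k / ((∑ j, α j * R1 j) - R1C) < R2 k / ((∑ j, (1 - α j) * R2 j) - R2C) →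
        α k = 0) := by
  intro k
  set S1 : ℝ := ∑ j, α j * R1 j with hS1def
  set S2 : ℝ := ∑ j, (1 - α j) * R2 j with hS2def
  have ha : 0 < R1 k := hR1 k
  have hb : 0 < R2 k := hR2 k
  set a : ℝ := R1 k with hadef
  set b : ℝ := R2 k with hbdef
  have hA : 0 < S1 - R1C := by linarith
  have hB : 0 < S2 - R2C := by linarith
  -- sum update lemmas
  have hsum1 : ∀ v : ℝ, ∑ j, Function.update α k v j * R1 j = S1 + (v - α k) * a := by
    intro v
    have h : ∀ j ∈ Finset.univ, Function.update α k v j * R1 j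
        = α j * R1 j + (if j = k then (v - α k) * R1 j else 0) := by
      intro j _
      by_cases h : j = k
      · subst h; simp [Function.update_self]; ring
      · simp [Function.update_of_ne h, h]
    rw [Finset.sum_congr rfl h, Finset.sum_add_distrib, Finset.sum_ite_eq' Finset.univ k]
    simp [hS1def, hadef]
  have hsum2 : ∀ v : ℝ, ∑ j, (1 - Function.update α k v j) * R2 j = S2 - (v - α k) * b := by
    intro v
    have h : ∀ j ∈ Finset.univ, (1 - Function.update α k v j) * R2 j
        = (1 - α j) * R2 j + (if j = k then -((v - α k) * R2 j) else 0) := by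
      intro j _
      by_cases h : j = k
      · subst h; simp [Function.update_self]; ring
      · simp [Function.update_of_ne h, h]
    rw [Finset.sum_congr rfl h, Finset.sum_add_distrib, Finset.sum_ite_eq' Finset.univ k]
    simp [hS2def, hbdef]
    ring
  obtain ⟨hIcc, hc1, hc2⟩ := hmem
  -- key claim: a*(S2-R2C) > b*(S1-R1C) forces α k = 1
  have key2 : b * (S1 - R1C) < a * (S2 - R2C) → α k = 1 := by
    intro hlt
    by_contra hne
    have hk1 : α k < 1 := lt_of_le_of_ne (hIcc k).2 hne
    obtain ⟨t, ht0, ht1, ht2, ht3⟩ : ∃ t : ℝ, 0 < t ∧ t < 1 - α k ∧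
        t * b < S2 - R2C ∧ t * (a * b) < a * (S2 - R2C) - b * (S1 - R1C) := by
      have hmpos : 0 < min (1 - α k)
          (min ((S2 - R2C) / b) ((a * (S2 - R2C) - b * (S1 - R1C)) / (a * b))) :=
        lt_min (by linarith)
          (lt_min (div_pos hB hb) (div_pos (by linarith) (mul_pos ha hb)))
      have hl1 := min_le_left (1 - α k)
          (min ((S2 - R2C) / b) ((a * (S2 - R2C) - b * (S1 - R1C)) / (a * b)))
      have hl2 := min_le_right (1 - α k)
          (min ((S2 - R2C) / b) ((a * (S2 - R2C) - b * (S1 - R1C)) / (a * b)))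
      have hl3 := min_le_left ((S2 - R2C) / b) ((a * (S2 - R2C) - b * (S1 - R1C)) / (a * b))
      have hl4 := min_le_right ((S2 - R2C) / b) ((a * (S2 - R2C) - b * (S1 - R1C)) / (a * b))
      refine ⟨min (1 - α k)
          (min ((S2 - R2C) / b) ((a * (S2 - R2C) - b * (S1 - R1C)) / (a * b))) / 2,
          by linarith, by linarith, ?_, ?_⟩
      · have h1 : min (1 - α k)
            (min ((S2 - R2C) / b) ((a * (S2 - R2C) - b * (S1 - R1C)) / (a * b))) / 2
            < (S2 - R2C) / b := by
          have : 0 < (S2 - R2C) / b := div_pos hB hb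
          linarith
        calc min (1 - α k)
              (min ((S2 - R2C) / b) ((a * (S2 - R2C) - b * (S1 - R1C)) / (a * b))) / 2 * b
            < ((S2 - R2C) / b) * b := mul_lt_mul_of_pos_right h1 hb
          _ = S2 - R2C := by field_simp
      · have h1 : min (1 - α k)
            (min ((S2 - R2C) / b) ((a * (S2 - R2C) - b * (S1 - R1C)) / (a * b))) / 2
            < (a * (S2 - R2C) - b * (S1 - R1C)) / (a * b) := by
          have : 0 < (a * (S2 - R2C) - b * (S1 - R1C)) / (a * b) :=
            div_pos (by linarith) (mul_pos ha hb)
          linarith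
        calc min (1 - α k)
              (min ((S2 - R2C) / b) ((a * (S2 - R2C) - b * (S1 - R1C)) / (a * b))) / 2 * (a * b)
            < ((a * (S2 - R2C) - b * (S1 - R1C)) / (a * b)) * (a * b) :=
              mul_lt_mul_of_pos_right h1 (mul_pos ha hb)
          _ = a * (S2 - R2C) - b * (S1 - R1C) := by field_simp
    have hmem' : Function.update α k (α k + t) ∈
        {x : Fin K → ℝ | (∀ j, x j ∈ Set.Icc (0:ℝ) 1) ∧
          R1C ≤ ∑ j, x j * R1 j ∧ R2C ≤ ∑ j, (1 - x j) * R2 j} := by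
      refine ⟨fun j => ?_, ?_, ?_⟩
      · by_cases h : j = k
        · rw [h, Function.update_self]
          exact ⟨by nlinarith [(hIcc k).1], by linarith⟩
        · rw [Function.update_of_ne h]; exact hIcc j
      · rw [hsum1]
        have e : (α k + t - α k) * a = t * a := by ring
        rw [e]; nlinarith
      · rw [hsum2]
        have e : (α k + t - α k) * b = t * b := by ring
        rw [e]; linarith
    have hle := hmax hmem'
    simp only [Set.mem_setOf_eq, hsum1, hsum2] at hle
    rw [← hS1def, ← hS2def] at hle
    have e1 : (α k + t - α k) * a = t * a := by ring
    have e2 : (α k + t - α k) * b = t * b := by ring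
    rw [e1, e2] at hle
    nlinarith [hle, mul_lt_mul_of_pos_left ht3 ht0]
  -- key claim: a*(S2-R2C) < b*(S1-R1C) forces α k = 0
  have key3 : a * (S2 - R2C) < b * (S1 - R1C) → α k = 0 := by
    intro hlt
    by_contra hne
    have hk0 : 0 < α k := lt_of_le_of_ne (hIcc k).1 (Ne.symm hne)
    obtain ⟨t, ht0, ht1, ht2, ht3⟩ : ∃ t : ℝ, 0 < t ∧ t < α k ∧
        t * a < S1 - R1C ∧ t * (a * b) < b * (S1 - R1C) - a * (S2 - R2C) := by
      have hmpos : 0 < min (α k)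
          (min ((S1 - R1C) / a) ((b * (S1 - R1C) - a * (S2 - R2C)) / (a * b))) :=
        lt_min hk0
          (lt_min (div_pos hA ha) (div_pos (by linarith) (mul_pos ha hb)))
      have hl1 := min_le_left (α k)
          (min ((S1 - R1C) / a) ((b * (S1 - R1C) - a * (S2 - R2C)) / (a * b)))
      have hl2 := min_le_right (α k)
          (min ((S1 - R1C) / a) ((b * (S1 - R1C) - a * (S2 - R2C)) / (a * b)))
      have hl3 := min_le_left ((S1 - R1C) / a) ((b * (S1 - R1C) - a * (S2 - R2C)) / (a * b))
      have hl4 := min_le_right ((S1 - R1C) / a) ((b * (S1 - R1C) - a * (S2 - R2C)) / (a * b))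
      refine ⟨min (α k)
          (min ((S1 - R1C) / a) ((b * (S1 - R1C) - a * (S2 - R2C)) / (a * b))) / 2,
          by linarith, by linarith, ?_, ?_⟩
      · have h1 : min (α k)
            (min ((S1 - R1C) / a) ((b * (S1 - R1C) - a * (S2 - R2C)) / (a * b))) / 2
            < (S1 - R1C) / a := by
          have : 0 < (S1 - R1C) / a := div_pos hA ha
          linarith
        calc min (α k)
              (min ((S1 - R1C) / a) ((b * (S1 - R1C) - a * (S2 - R2C)) / (a * b))) / 2 * a
            < ((S1 - R1C) / a) * a := mul_lt_mul_of_pos_right h1 ha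
          _ = S1 - R1C := by field_simp
      · have h1 : min (α k)
            (min ((S1 - R1C) / a) ((b * (S1 - R1C) - a * (S2 - R2C)) / (a * b))) / 2
            < (b * (S1 - R1C) - a * (S2 - R2C)) / (a * b) := by
          have : 0 < (b * (S1 - R1C) - a * (S2 - R2C)) / (a * b) :=
            div_pos (by linarith) (mul_pos ha hb)
          linarith
        calc min (α k)
              (min ((S1 - R1C) / a) ((b * (S1 - R1C) - a * (S2 - R2C)) / (a * b))) / 2 * (a * b)
            < ((b * (S1 - R1C) - a * (S2 - R2C)) / (a * b)) * (a * b) :=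
              mul_lt_mul_of_pos_right h1 (mul_pos ha hb)
          _ = b * (S1 - R1C) - a * (S2 - R2C) := by field_simp
    have hmem' : Function.update α k (α k - t) ∈
        {x : Fin K → ℝ | (∀ j, x j ∈ Set.Icc (0:ℝ) 1) ∧
          R1C ≤ ∑ j, x j * R1 j ∧ R2C ≤ ∑ j, (1 - x j) * R2 j} := by
      refine ⟨fun j => ?_, ?_, ?_⟩
      · by_cases h : j = k
        · rw [h, Function.update_self]
          exact ⟨by linarith, by linarith [(hIcc k).2]⟩
        · rw [Function.update_of_ne h]; exact hIcc j
      · rw [hsum1]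
        have e : (α k - t - α k) * a = -(t * a) := by ring
        rw [e]; linarith
      · rw [hsum2]
        have e : (α k - t - α k) * b = -(t * b) := by ring
        rw [e]; nlinarith
    have hle := hmax hmem'
    simp only [Set.mem_setOf_eq, hsum1, hsum2] at hle
    rw [← hS1def, ← hS2def] at hle
    have e1 : (α k - t - α k) * a = -(t * a) := by ring
    have e2 : (α k - t - α k) * b = -(t * b) := by ring
    rw [e1, e2] at hle
    nlinarith [hle, mul_lt_mul_of_pos_left ht3 ht0]
  refine ⟨?_, ?_, ?_⟩
  · rintro ⟨h0, h1⟩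
    rcases lt_trichotomy (a * (S2 - R2C)) (b * (S1 - R1C)) with h | h | h
    · exact absurd (key3 h) (by linarith)
    · rw [div_eq_div_iff (ne_of_gt hA) (ne_of_gt hB)]; linarith
    · exact absurd (key2 h) (by linarith)
  · intro h
    exact key2 ((div_lt_div_iff₀ hB hA).mp h)
  · intro h
    exact key3 ((div_lt_div_iff₀ hA hB).mp h)
end

section
/- Consider the two-player FDM/TDM Nash bargaining problem over K frequency bins with per-bin rates R_1(k), R_2(k) > 0, disagreement rates R_{1C}, R_{2C} ≥ 0, and R_1(α) = Σ_k α(k)R_1(k), R_2(α) = Σ_k (1−α(k))R_2(k). Suppose the rate ratios L_k = R_1(k)/R_2(k) are pairwise distinct and strictly decreasing in k. If α* maximizes (R_1(α) − R_{1C})(R_2(α) − R_{2C}) over {α ∈ [0,1]^K : R_1(α) ≥ R_{1C}, R_2(α) ≥ R_{2C}} with R_1(α*) > R_{1C} and R_2(α*) > R_{2C}, then there is at most one bin k_s with 0 < α*(k_s) < 1, and the allocation has threshold structure: α*(k) = 1 for every k < k_s and α*(k) = 0 for every k > k_s. -/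
/-- Threshold structure of the two-player FDM/TDM Nash bargaining solution when
the rate ratios `L k = R1 k / R2 k` are strictly decreasing (hence pairwise
distinct): a maximizer `α` of the Nash product with both surpluses strictly
positive has at most one fractionally shared bin, and there is a bin `ks` such
that `α k = 1` for all `k < ks` and `α k = 0` for all `k > ks`. -/
theorem fdm_tdm_nbs_threshold_structure (K : ℕ) (R1 R2 : Fin K → ℝ)
    (hR1 : ∀ k, 0 < R1 k) (hR2 : ∀ k, 0 < R2 k)
    (R1C R2C : ℝ) (hR1C : 0 ≤ R1C) (hR2C : 0 ≤ R2C)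
    (hL : StrictAnti (fun k : Fin K => R1 k / R2 k))
    (α : Fin K → ℝ)
    (hmem : α ∈ {a : Fin K → ℝ | (∀ k, a k ∈ Set.Icc (0:ℝ) 1) ∧
        R1C ≤ ∑ k, a k * R1 k ∧ R2C ≤ ∑ k, (1 - a k) * R2 k})
    (hmax : IsMaxOn
      (fun a : Fin K → ℝ =>
        ((∑ k, a k * R1 k) - R1C) * ((∑ k, (1 - a k) * R2 k) - R2C))
      {a : Fin K → ℝ | (∀ k, a k ∈ Set.Icc (0:ℝ) 1) ∧
        R1C ≤ ∑ k, a k * R1 k ∧ R2C ≤ ∑ k, (1 - a k) * R2 k} α)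
    (hs1 : R1C < ∑ k, α k * R1 k) (hs2 : R2C < ∑ k, (1 - α k) * R2 k) :
    (∀ k1 k2 : Fin K, (0 < α k1 ∧ α k1 < 1) → (0 < α k2 ∧ α k2 < 1) → k1 = k2) ∧
    ∃ ks : Fin K, (∀ k, k < ks → α k = 1) ∧ (∀ k, ks < k → α k = 0) := by
  obtain ⟨hIcc, -, -⟩ := hmem
  set S1 : ℝ := (∑ k, α k * R1 k) - R1C with hS1def
  set S2 : ℝ := (∑ k, (1 - α k) * R2 k) - R2C with hS2def
  have hS1 : 0 < S1 := by simp only [hS1def]; linarith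
  have hS2 : 0 < S2 := by simp only [hS2def]; linarith
  -- generic perturbation inequality
  have hpert : ∀ (k : Fin K) (t : ℝ), 0 ≤ α k + t → α k + t ≤ 1 →
      0 ≤ S1 + t * R1 k → 0 ≤ S2 - t * R2 k →
      (S1 + t * R1 k) * (S2 - t * R2 k) ≤ S1 * S2 := by
    intro k t h0 h1 hA' hB'
    set a : Fin K → ℝ := fun j => α j + if j = k then t else 0 with ha
    have hAa : (∑ j, a j * R1 j) = (∑ j, α j * R1 j) + t * R1 k := by
      simp only [ha, add_mul, Finset.sum_add_distrib, ite_mul, zero_mul]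
      rw [Finset.sum_ite_eq' Finset.univ k (fun j => t * R1 j)]
      simp
    have hBa : (∑ j, (1 - a j) * R2 j) = (∑ j, (1 - α j) * R2 j) - t * R2 k := by
      have e : ∀ j : Fin K, (1 - a j) * R2 j
          = (1 - α j) * R2 j - (if j = k then t * R2 j else 0) := by
        intro j
        simp only [ha]
        by_cases hj : j = k <;> simp [hj] <;> ring
      rw [Finset.sum_congr rfl (fun j _ => e j), Finset.sum_sub_distrib,
        Finset.sum_ite_eq' Finset.univ k (fun j => t * R2 j)]
      simp
    have hamem : a ∈ {a : Fin K → ℝ | (∀ k, a k ∈ Set.Icc (0:ℝ) 1) ∧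
        R1C ≤ ∑ k, a k * R1 k ∧ R2C ≤ ∑ k, (1 - a k) * R2 k} := by
      refine ⟨fun j => ?_, ?_, ?_⟩
      · by_cases hj : j = k
        · subst hj
          simp only [ha, if_pos rfl]
          exact ⟨h0, h1⟩
        · simp only [ha, if_neg hj, add_zero]
          exact hIcc j
      · rw [hAa]
        have : (∑ j, α j * R1 j) + t * R1 k - R1C = S1 + t * R1 k := by
          rw [hS1def]; ring
        linarith
      · rw [hBa]
        have : (∑ j, (1 - α j) * R2 j) - t * R2 k - R2C = S2 - t * R2 k := by
          rw [hS2def]; ring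
        linarith
    have hle := hmax hamem
    simp only [Set.mem_setOf_eq] at hle
    rw [hAa, hBa] at hle
    have e1 : (∑ j, α j * R1 j) + t * R1 k - R1C = S1 + t * R1 k := by
      rw [hS1def]; ring
    have e2 : (∑ j, (1 - α j) * R2 j) - t * R2 k - R2C = S2 - t * R2 k := by
      rw [hS2def]; ring
    calc (S1 + t * R1 k) * (S2 - t * R2 k)
        = ((∑ j, α j * R1 j) + t * R1 k - R1C)
            * ((∑ j, (1 - α j) * R2 j) - t * R2 k - R2C) := by rw [e1, e2]
      _ ≤ S1 * S2 := by
          rw [hS1def, hS2def]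
          exact hle
  -- first order condition: can increase
  have hup : ∀ k : Fin K, α k < 1 → R1 k * S2 ≤ R2 k * S1 := by
    intro k hk
    by_contra h
    push_neg at h
    have hgpos : 0 < R1 k * S2 - R2 k * S1 := by linarith
    set g : ℝ := R1 k * S2 - R2 k * S1 with hg
    set m : ℝ := min (min (1 - α k) (S2 / R2 k)) (g / (R1 k * R2 k)) with hm
    have hmpos : 0 < m :=
      lt_min (lt_min (by linarith) (div_pos hS2 (hR2 k)))
        (div_pos hgpos (mul_pos (hR1 k) (hR2 k)))
    set t : ℝ := m / 2 with ht
    have ht0 : 0 < t := by positivity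
    have hm1 : m ≤ 1 - α k := le_trans (min_le_left _ _) (min_le_left _ _)
    have hm2 : m ≤ S2 / R2 k := le_trans (min_le_left _ _) (min_le_right _ _)
    have hm3 : m ≤ g / (R1 k * R2 k) := min_le_right _ _
    have htlt : t < g / (R1 k * R2 k) := by
      have : t < m := by rw [ht]; linarith
      linarith
    have ht3 : t * (R1 k * R2 k) < g := (lt_div_iff₀ (mul_pos (hR1 k) (hR2 k))).mp htlt
    have ht2 : t * R2 k ≤ S2 := by
      have htle : t ≤ S2 / R2 k := by rw [ht]; linarith
      exact (le_div_iff₀ (hR2 k)).mp htle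
    have hkey := hpert k t (by linarith [(hIcc k).1]) (by rw [ht]; linarith)
      (by nlinarith [hR1 k]) (by linarith)
    nlinarith [hkey, mul_lt_mul_of_pos_left ht3 ht0]
  -- first order condition: can decrease
  have hdown : ∀ k : Fin K, 0 < α k → R2 k * S1 ≤ R1 k * S2 := by
    intro k hk
    by_contra h
    push_neg at h
    have hgpos : 0 < R2 k * S1 - R1 k * S2 := by linarith
    set g : ℝ := R2 k * S1 - R1 k * S2 with hg
    set m : ℝ := min (min (α k) (S1 / R1 k)) (g / (R1 k * R2 k)) with hm
    have hmpos : 0 < m :=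
      lt_min (lt_min hk (div_pos hS1 (hR1 k)))
        (div_pos hgpos (mul_pos (hR1 k) (hR2 k)))
    set s : ℝ := m / 2 with hs
    have hs0 : 0 < s := by positivity
    have hm1 : m ≤ α k := le_trans (min_le_left _ _) (min_le_left _ _)
    have hm2 : m ≤ S1 / R1 k := le_trans (min_le_left _ _) (min_le_right _ _)
    have hm3 : m ≤ g / (R1 k * R2 k) := min_le_right _ _
    have hslt : s < g / (R1 k * R2 k) := by
      have : s < m := by rw [hs]; linarith
      linarith
    have hs3 : s * (R1 k * R2 k) < g := (lt_div_iff₀ (mul_pos (hR1 k) (hR2 k))).mp hslt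
    have hs2' : s * R1 k ≤ S1 := by
      have hsle : s ≤ S1 / R1 k := by rw [hs]; linarith
      exact (le_div_iff₀ (hR1 k)).mp hsle
    have hkey := hpert k (-s) (by rw [hs]; linarith) (by linarith [(hIcc k).2])
      (by push_cast; nlinarith) (by nlinarith [hR2 k])
    nlinarith [hkey, mul_lt_mul_of_pos_left hs3 hs0]
  have hone : ∀ k : Fin K, R2 k * S1 < R1 k * S2 → α k = 1 := by
    intro k h
    by_contra h'
    have : α k < 1 := lt_of_le_of_ne (hIcc k).2 h'
    linarith [hup k this]
  have hzero : ∀ k : Fin K, R1 k * S2 < R2 k * S1 → α k = 0 := by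
    intro k h
    by_contra h'
    have : 0 < α k := lt_of_le_of_ne (hIcc k).1 (Ne.symm h')
    linarith [hdown k this]
  have hratio : ∀ k1 k2 : Fin K, k1 < k2 → R1 k2 * R2 k1 < R1 k1 * R2 k2 := by
    intro k1 k2 hlt
    have := hL hlt
    simpa [div_lt_div_iff₀ (hR2 k2) (hR2 k1)] using this
  constructor
  · intro k1 k2 ⟨h1a, h1b⟩ ⟨h2a, h2b⟩
    have e1 : R1 k1 * S2 = R2 k1 * S1 := le_antisymm (hup k1 h1b) (hdown k1 h1a)
    have e2 : R1 k2 * S2 = R2 k2 * S1 := le_antisymm (hup k2 h2b) (hdown k2 h2a)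
    have q1 : R1 k1 / R2 k1 = S1 / S2 := by
      rw [div_eq_div_iff (hR2 k1).ne' hS2.ne']; linarith
    have q2 : R1 k2 / R2 k2 = S1 / S2 := by
      rw [div_eq_div_iff (hR2 k2).ne' hS2.ne']; linarith
    exact hL.injective (q1.trans q2.symm)
  · have hK : 0 < K := by
      rcases Nat.eq_zero_or_pos K with h | h
      · subst h; simp at hs1; linarith
      · exact h
    by_cases hex : ∃ k : Fin K, R1 k * S2 ≤ R2 k * S1
    · obtain ⟨k0, hk0⟩ := hex
      obtain ⟨ks, hks, hmin⟩ := Finset.exists_min_image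
        (Finset.univ.filter fun k => R1 k * S2 ≤ R2 k * S1) id
        ⟨k0, by simp [hk0]⟩
      simp only [Finset.mem_filter, Finset.mem_univ, true_and, id] at hks hmin
      refine ⟨ks, ?_, ?_⟩
      · intro k hk
        apply hone
        by_contra h
        push_neg at h
        exact absurd hk (not_lt.mpr (hmin k h))
      · intro k hk
        apply hzero
        have hr := hratio ks k hk
        nlinarith [hR2 ks, hR2 k, mul_lt_mul_of_pos_right hr hS2,
          mul_le_mul_of_nonneg_right hks (le_of_lt (hR2 k))]
    · push_neg at hex
      refine ⟨⟨K - 1, by omega⟩, fun k _ => hone k (hex k), fun k hk => ?_⟩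
      exfalso
      have := k.isLt
      simp only [Fin.lt_def] at hk
      omega
end

section
/- Consider the N-player FDM/TDM Nash bargaining problem over K frequency bins: per-bin rates R_n(k) > 0 for n = 1,…,N and k = 1,…,K, disagreement rates R_{nC} ≥ 0, feasible allocations α with α_n(k) ≥ 0 and Σ_{n=1}^N α_n(k) = 1 for every k, and Nash product ∏_{n=1}^N (Σ_k α_n(k) R_n(k) − R_{nC}). If the Nash product attains a maximum over the feasible allocations with all surpluses Σ_k α_n(k)R_n(k) − R_{nC} positive, then the maximum is attained at some feasible allocation α for which the number of bins k that are shared by two or more players (i.e. bins k such that α_m(k) > 0 and α_n(k) > 0 for some m ≠ n) is at most N(N−1)/2. -/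
set_option maxHeartbeats 1000000

open Finset

private noncomputable def cnt {N K : ℕ} (a : Fin N → Fin K → ℝ) : ℕ :=
  ∑ k, Set.ncard {n | 0 < a n k}

private theorem key {N K : ℕ} (R : Fin N → Fin K → ℝ) (hR : ∀ n k, 0 < R n k)
    (RC : Fin N → ℝ)
    (a : Fin N → Fin K → ℝ)
    (ha1 : ∀ k, (∑ n, a n k) = 1)
    (hmax : ∀ b : Fin N → Fin K → ℝ, (∀ n k, 0 ≤ b n k) → (∀ k, (∑ n, b n k) = 1) →
      (∏ p, ((∑ k, b p k * R p k) - RC p)) ≤ (∏ p, ((∑ k, a p k * R p k) - RC p)))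
    (hpos : ∀ p, 0 < (∑ k, a p k * R p k) - RC p)
    (hmin : ∀ b : Fin N → Fin K → ℝ, (∀ n k, 0 ≤ b n k) → (∀ k, (∑ n, b n k) = 1) →
      ((∏ p, ((∑ k, b p k * R p k) - RC p)) = (∏ p, ((∑ k, a p k * R p k) - RC p))) →
      (∀ p, 0 < (∑ k, b p k * R p k) - RC p) →
      cnt a ≤ cnt b)
    {m n : Fin N} {k1 k2 : Fin K} (hmn : m ≠ n) (hk : k1 ≠ k2)
    (ha0 : ∀ n k, 0 ≤ a n k)
    (hm1 : 0 < a m k1) (hn1 : 0 < a n k1) (hm2 : 0 < a m k2) (hn2 : 0 < a n k2) :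
    False := by
  classical
  set r : ℝ := R n k1 / R n k2 with hrdef
  have hrpos : 0 < r := div_pos (hR n k1) (hR n k2)
  set e : Fin K → ℝ := fun q => if q = k1 then 1 else if q = k2 then -r else 0 with hedef
  set d : Fin N → Fin K → ℝ :=
    fun p q => (if p = n then e q else 0) - (if p = m then e q else 0) with hddef
  set pert : ℝ → Fin N → Fin K → ℝ := fun δ p q => a p q + δ * d p q with hpdef
  have he1 : e k1 = 1 := by simp [hedef]
  have he2 : e k2 = -r := by simp [hedef, (Ne.symm hk)]
  have he0 : ∀ q, q ≠ k1 → q ≠ k2 → e q = 0 := by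
    intro q h1 h2; simp [hedef, h1, h2]
  -- column sums of d vanish
  have hdsum : ∀ q, (∑ p, d p q) = 0 := by
    intro q
    simp [hddef, Finset.sum_sub_distrib]
  have hsum1 : ∀ δ k, (∑ p, pert δ p k) = 1 := by
    intro δ k
    simp [hpdef, Finset.sum_add_distrib, ← Finset.mul_sum, hdsum, ha1]
  -- special values
  have hdm1 : d m k1 = -1 := by simp [hddef, hmn, he1]
  have hdn1 : d n k1 = 1 := by simp [hddef, Ne.symm hmn, he1]
  have hdm2 : d m k2 = r := by simp [hddef, hmn, he2]
  have hdn2 : d n k2 = -r := by simp [hddef, Ne.symm hmn, he2]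
  have hdo : ∀ p q, p ≠ m → p ≠ n → d p q = 0 := by
    intro p q h1 h2; simp [hddef, h1, h2]
  have hdq : ∀ p q, q ≠ k1 → q ≠ k2 → d p q = 0 := by
    intro p q h1 h2; simp [hddef, he0 q h1 h2]
  -- effect on the rate sums
  have hse : ∀ p, (∑ q, e q * R p q) = R p k1 - r * R p k2 := by
    intro p
    have h : ∀ q, e q * R p q
        = (if q = k1 then R p k1 else 0) + (if q = k2 then -(r * R p k2) else 0) := by
      intro q
      by_cases h1 : q = k1
      · subst h1; simp [he1, hk]
      · by_cases h2 : q = k2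
        · subst h2; simp [he2, h1]
        · simp [he0 q h1 h2, h1, h2]
    rw [Finset.sum_congr rfl fun q _ => h q]
    rw [Finset.sum_add_distrib]
    simp
    ring
  have hdR : ∀ p, (∑ q, d p q * R p q)
      = (if p = n then R p k1 - r * R p k2 else 0)
        - (if p = m then R p k1 - r * R p k2 else 0) := by
    intro p
    have h : ∀ q, d p q * R p q
        = (if p = n then e q * R p q else 0) - (if p = m then e q * R p q else 0) := by
      intro q; by_cases h1 : p = n <;> by_cases h2 : p = m <;>
        simp [hddef, h1, h2, ite_mul, zero_mul, hmn, Ne.symm hmn] <;> ring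
    rw [Finset.sum_congr rfl fun q _ => h q, Finset.sum_sub_distrib]
    by_cases h1 : p = n <;> by_cases h2 : p = m <;> simp [h1, h2, hse]
  have hBz : R n k1 - r * R n k2 = 0 := by
    rw [hrdef, div_mul_cancel₀ _ (ne_of_gt (hR n k2))]; ring
  set c : ℝ := r * R m k2 - R m k1 with hcdef
  have hsurp : ∀ δ p, (∑ q, pert δ p q * R p q)
      = (∑ q, a p q * R p q) + δ * (if p = m then c else 0) := by
    intro δ p
    have h : ∀ q, pert δ p q * R p q = a p q * R p q + δ * (d p q * R p q) := by
      intro q; simp only [hpdef]; ring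
    rw [Finset.sum_congr rfl fun q _ => h q, Finset.sum_add_distrib, ← Finset.mul_sum, hdR]
    by_cases h1 : p = n
    · subst h1; simp [Ne.symm hmn, hBz]
    · by_cases h2 : p = m
      · subst h2; simp [hmn, hcdef]; try ring
      · simp [h1, h2]
  -- Nash product along the perturbation
  set C : ℝ := ∏ p ∈ Finset.univ.erase m, ((∑ q, a p q * R p q) - RC p) with hCdef
  have hCpos : 0 < C := Finset.prod_pos fun p _ => hpos p
  have hNP : ∀ δ, (∏ p, ((∑ q, pert δ p q * R p q) - RC p))
      = (∏ p, ((∑ q, a p q * R p q) - RC p)) + δ * c * C := by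
    intro δ
    rw [← Finset.mul_prod_erase Finset.univ _ (Finset.mem_univ m),
        ← Finset.mul_prod_erase Finset.univ (fun p => (∑ q, a p q * R p q) - RC p)
          (Finset.mem_univ m)]
    have h : ∀ p ∈ Finset.univ.erase m,
        (∑ q, pert δ p q * R p q) - RC p = (∑ q, a p q * R p q) - RC p := by
      intro p hp
      rw [hsurp]
      simp [Finset.ne_of_mem_erase hp]
    rw [Finset.prod_congr rfl h, hsurp, hCdef]
    simp only [eq_self_iff_true, if_true]
    ring
  -- feasibility of the perturbation
  have hfeas : ∀ δ, δ ≤ a m k1 → -δ ≤ a n k1 → δ * r ≤ a n k2 → -(δ * r) ≤ a m k2 →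
      ∀ p q, 0 ≤ pert δ p q := by
    intro δ h1 h2 h3 h4 p q
    by_cases hpm : p = m
    · subst hpm
      by_cases hq1 : q = k1
      · subst hq1; rw [hpdef]; simp only [hdm1]; linarith
      · by_cases hq2 : q = k2
        · subst hq2; rw [hpdef]; simp only [hdm2]; nlinarith
        · rw [hpdef]; simp only [hdq _ _ hq1 hq2]; simpa using ha0 p q
    · by_cases hpn : p = n
      · subst hpn
        by_cases hq1 : q = k1
        · subst hq1; rw [hpdef]; simp only [hdn1]; linarith
        · by_cases hq2 : q = k2
          · subst hq2; rw [hpdef]; simp only [hdn2]; nlinarith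
          · rw [hpdef]; simp only [hdq _ _ hq1 hq2]; simpa using ha0 p q
      · rw [hpdef]; simp only [hdo _ _ hpm hpn]; simpa using ha0 p q
  -- first-order condition : c = 0
  set ε : ℝ := min (min (a m k1) (a n k1)) (min (a n k2 / r) (a m k2 / r)) with hεdef
  have hεpos : 0 < ε := by
    refine lt_min (lt_min hm1 hn1) (lt_min ?_ ?_) <;> positivity
  have hεfeas1 : ∀ p q, 0 ≤ pert ε p q := by
    apply hfeas
    · exact le_trans (min_le_left _ _) (min_le_left _ _)
    · have : 0 ≤ ε := hεpos.le
      linarith [ha0 n k1]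
    · have h : ε ≤ a n k2 / r := le_trans (min_le_right _ _) (min_le_left _ _)
      calc ε * r ≤ (a n k2 / r) * r := by nlinarith
        _ = a n k2 := div_mul_cancel₀ _ (ne_of_gt hrpos)
    · nlinarith [ha0 m k2, hεpos.le, hrpos.le]
  have hεfeas2 : ∀ p q, 0 ≤ pert (-ε) p q := by
    apply hfeas
    · linarith [ha0 m k1, hεpos.le]
    · have h : ε ≤ a n k1 := le_trans (min_le_left _ _) (min_le_right _ _)
      linarith
    · nlinarith [ha0 n k2, hεpos.le, hrpos.le]
    · have h : ε ≤ a m k2 / r := le_trans (min_le_right _ _) (min_le_right _ _)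
      have : ε * r ≤ a m k2 := by
        calc ε * r ≤ (a m k2 / r) * r := by nlinarith
          _ = a m k2 := div_mul_cancel₀ _ (ne_of_gt hrpos)
      linarith
  have hc0 : c = 0 := by
    have h1 := hmax (pert ε) hεfeas1 (hsum1 ε)
    have h2 := hmax (pert (-ε)) hεfeas2 (hsum1 (-ε))
    rw [hNP ε] at h1
    rw [hNP (-ε)] at h2
    have h3 : ε * c * C = 0 := le_antisymm (by linarith) (by nlinarith)
    by_contra hc
    exact (mul_ne_zero (mul_ne_zero hεpos.ne' hc) hCpos.ne') h3
  -- the long move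
  set δs : ℝ := min (a m k1) (a n k2 / r) with hδdef
  have hδpos : 0 < δs := lt_min hm1 (by positivity)
  have hδfeas : ∀ p q, 0 ≤ pert δs p q := by
    apply hfeas
    · exact min_le_left _ _
    · linarith [ha0 n k1, hδpos.le]
    · calc δs * r ≤ (a n k2 / r) * r := by nlinarith [min_le_right (a m k1) (a n k2 / r)]
        _ = a n k2 := div_mul_cancel₀ _ (ne_of_gt hrpos)
    · nlinarith [ha0 m k2, hδpos.le, hrpos.le]
  have hδNP : (∏ p, ((∑ q, pert δs p q * R p q) - RC p))
      = (∏ p, ((∑ q, a p q * R p q) - RC p)) := by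
    rw [hNP, hc0]; ring
  have hδpos' : ∀ p, 0 < (∑ q, pert δs p q * R p q) - RC p := by
    intro p
    rw [hsurp]
    rcases eq_or_ne p m with h | h
    · subst h
      simp only [eq_self_iff_true, if_true, hc0, mul_zero, add_zero]
      exact hpos p
    · simp only [if_neg h, mul_zero, add_zero]
      exact hpos p
  have hcnt := hmin (pert δs) hδfeas (hsum1 δs) hδNP hδpos'
  -- but cnt (pert δs) < cnt a
  have hlt : cnt (pert δs) < cnt a := by
    unfold cnt
    have hsub : ∀ k, {p | 0 < pert δs p k} ⊆ {p | 0 < a p k} := by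
      intro k p hp
      simp only [Set.mem_setOf_eq] at hp ⊢
      by_cases hpm : p = m
      · subst hpm
        by_cases hq1 : k = k1
        · subst hq1; exact hm1
        · by_cases hq2 : k = k2
          · subst hq2; exact hm2
          · rw [hpdef] at hp; simp only [hdq _ _ hq1 hq2] at hp; simpa using hp
      · by_cases hpn : p = n
        · subst hpn
          by_cases hq1 : k = k1
          · subst hq1; exact hn1
          · by_cases hq2 : k = k2
            · subst hq2; exact hn2
            · rw [hpdef] at hp; simp only [hdq _ _ hq1 hq2] at hp; simpa using hp
        · rw [hpdef] at hp; simp only [hdo _ _ hpm hpn] at hp; simpa using hp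
    have hle : ∀ k ∈ Finset.univ,
        Set.ncard {p | 0 < pert δs p k} ≤ Set.ncard {p | 0 < a p k} :=
      fun k _ => Set.ncard_le_ncard (hsub k) (Set.toFinite _)
    have hstrict : ∃ k ∈ Finset.univ,
        Set.ncard {p | 0 < pert δs p k} < Set.ncard {p | 0 < a p k} := by
      rcases min_cases (a m k1) (a n k2 / r) with ⟨hmin1, _⟩ | ⟨hmin2, hlt2⟩
      · refine ⟨k1, Finset.mem_univ _, ?_⟩
        apply Set.ncard_lt_ncard _ (Set.toFinite _)
        refine ⟨hsub k1, fun hss => ?_⟩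
        have hmem : m ∈ {p | 0 < a p k1} := hm1
        have := hss hmem
        simp only [Set.mem_setOf_eq, hpdef, hdm1] at this
        rw [hδdef, hmin1] at this
        linarith
      · refine ⟨k2, Finset.mem_univ _, ?_⟩
        apply Set.ncard_lt_ncard _ (Set.toFinite _)
        refine ⟨hsub k2, fun hss => ?_⟩
        have hmem : n ∈ {p | 0 < a p k2} := hn2
        have := hss hmem
        simp only [Set.mem_setOf_eq, hpdef, hdn2] at this
        rw [hδdef, hmin2] at this
        nlinarith [div_mul_cancel₀ (a n k2) (ne_of_gt hrpos)]
    exact Finset.sum_lt_sum hle hstrict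
  omega



/-- In the N-player FDM/TDM Nash bargaining problem over K frequency bins, if
the Nash product `∏_n (Σ_k α n k · R n k − RC n)` attains a maximum over the
feasible allocations (`α n k ≥ 0`, `Σ_n α n k = 1` for each bin `k`) at a point
where all surpluses are positive, then the maximum is attained at some feasible
allocation in which at most `N(N−1)/2` bins are shared by two or more players. -/
theorem fdm_tdm_nbs_few_shared_bins (N K : ℕ)
    (R : Fin N → Fin K → ℝ) (hR : ∀ n k, 0 < R n k)
    (RC : Fin N → ℝ) (hRC : ∀ n, 0 ≤ RC n)
    (Feas : Set (Fin N → Fin K → ℝ))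
    (hFeas : Feas = {a : Fin N → Fin K → ℝ |
        (∀ n k, 0 ≤ a n k) ∧ ∀ k, (∑ n, a n k) = 1})
    (NP : (Fin N → Fin K → ℝ) → ℝ)
    (hNP : ∀ a, NP a = ∏ n, ((∑ k, a n k * R n k) - RC n))
    (hex : ∃ a ∈ Feas, IsMaxOn NP Feas a ∧
      ∀ n, 0 < (∑ k, a n k * R n k) - RC n) :
    ∃ a ∈ Feas, IsMaxOn NP Feas a ∧
      Set.ncard {k : Fin K | ∃ m n : Fin N, m ≠ n ∧ 0 < a m k ∧ 0 < a n k}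
        ≤ N * (N - 1) / 2 := by
    classical
  obtain ⟨a0, ha0F, ha0max, ha0pos⟩ := hex
  set V : Set ℕ := {c | ∃ b, b ∈ Feas ∧ IsMaxOn NP Feas b ∧
      (∀ p, 0 < (∑ k, b p k * R p k) - RC p) ∧ cnt b = c} with hV
  have hVne : V.Nonempty := ⟨cnt a0, a0, ha0F, ha0max, ha0pos, rfl⟩
  obtain ⟨b, hbF, hbmax, hbpos, hbc⟩ := Nat.sInf_mem hVne
  have hbF' : (∀ n k, 0 ≤ b n k) ∧ ∀ k, (∑ n, b n k) = 1 := by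
    rw [hFeas] at hbF; exact hbF
  refine ⟨b, hbF, hbmax, ?_⟩
  -- the key pairwise property
  have hpair : ∀ (m n : Fin N) (k1 k2 : Fin K), m ≠ n → k1 ≠ k2 →
      0 < b m k1 → 0 < b n k1 → 0 < b m k2 → 0 < b n k2 → False := by
    intro m n k1 k2 hmn hk h1 h2 h3 h4
    refine key R hR RC b hbF'.2 ?_ hbpos ?_ hmn hk hbF'.1 h1 h2 h3 h4
    · intro b' hb'0 hb'1
      have hmem : b' ∈ Feas := by rw [hFeas]; exact ⟨hb'0, hb'1⟩
      have := hbmax hmem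
      simpa [hNP] using this
    · intro b' hb'0 hb'1 heq hpos'
      have hmem : b' ∈ Feas := by rw [hFeas]; exact ⟨hb'0, hb'1⟩
      have hNPeq : NP b' = NP b := by rw [hNP, hNP]; exact heq
      have hmax' : IsMaxOn NP Feas b' := by
        intro x hx
        exact le_trans (hbmax hx) (le_of_eq hNPeq.symm)
      have : cnt b' ∈ V := ⟨b', hmem, hmax', hpos', rfl⟩
      have hle := Nat.sInf_le this
      omega
  -- counting : map each shared bin to the 2-element set of a sharing pair
  have hN2 : ({u : Finset (Fin N) | u.card = 2}).ncard = N * (N - 1) / 2 := by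
    have h : {u : Finset (Fin N) | u.card = 2}
        = ↑(Finset.powersetCard 2 (Finset.univ : Finset (Fin N))) := by
      ext u; simp [Finset.mem_powersetCard]
    rw [h, Set.ncard_coe_finset, Finset.card_powersetCard, Finset.card_univ,
      Fintype.card_fin, Nat.choose_two_right]
  rw [← hN2]
  set F : Fin K → Finset (Fin N) := fun k =>
    if h : ∃ m n : Fin N, m ≠ n ∧ 0 < b m k ∧ 0 < b n k
    then {h.choose, h.choose_spec.choose} else ∅ with hF
  apply Set.ncard_le_ncard_of_injOn F ?_ ?_ (Set.toFinite _)
  · intro k hk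
    have h : ∃ m n : Fin N, m ≠ n ∧ 0 < b m k ∧ 0 < b n k := hk
    simp only [Set.mem_setOf_eq]
    rw [hF]
    simp only
    rw [dif_pos h]
    exact Finset.card_pair h.choose_spec.choose_spec.1
  · intro x hx y hy hxy
    by_contra hne
    have h1 : ∃ m n : Fin N, m ≠ n ∧ 0 < b m x ∧ 0 < b n x := hx
    have h2 : ∃ m n : Fin N, m ≠ n ∧ 0 < b m y ∧ 0 < b n y := hy
    obtain ⟨hne1, hx1, hx2⟩ := h1.choose_spec.choose_spec
    obtain ⟨hne2, hy1, hy2⟩ := h2.choose_spec.choose_spec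
    have hFx : F x = {h1.choose, h1.choose_spec.choose} := by
      rw [hF]; simp only; rw [dif_pos h1]
    have hFy : F y = {h2.choose, h2.choose_spec.choose} := by
      rw [hF]; simp only; rw [dif_pos h2]
    rw [hFx, hFy] at hxy
    have hm2 : h2.choose ∈ ({h1.choose, h1.choose_spec.choose} : Finset (Fin N)) := by
      rw [hxy]; exact Finset.mem_insert_self _ _
    have hn2 : h2.choose_spec.choose
        ∈ ({h1.choose, h1.choose_spec.choose} : Finset (Fin N)) := by
      rw [hxy]; exact Finset.mem_insert_of_mem (Finset.mem_singleton_self _)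
    rcases Finset.mem_insert.mp hm2 with hA | hA
    · rcases Finset.mem_insert.mp hn2 with hB | hB
      · exact hne2 (hA.trans hB.symm)
      · have hB' := Finset.mem_singleton.mp hB
        exact hpair h1.choose h1.choose_spec.choose x y hne1 hne hx1 hx2
          (hA ▸ hy1) (hB' ▸ hy2)
    · have hA' := Finset.mem_singleton.mp hA
      rcases Finset.mem_insert.mp hn2 with hB | hB
      · exact hpair h1.choose h1.choose_spec.choose x y hne1 hne hx1 hx2
          (hB ▸ hy2) (hA' ▸ hy1)
      · have hB' := Finset.mem_singleton.mp hB
        exact hne2 (hA'.trans hB'.symm)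
end
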